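/- arXiv:1302.5134 — 3 statements merged into one kernel-verified Lean document; each statement's English description precedes it below -/
import Mathlib

section
/- Let V be a finite vertex set and w : V × V → ℝ≥0 a symmetric nonnegative weight function with vol(V) > 0. Suppose (C*, C̄*) is a partition of V into nonempty sets with min(vol(C*), vol(C̄*)) = y·vol(V) for some y with 0 < y < 1/2 and vol(C*), vol(C̄*) > 0, and (C_B, C̄_B) is a volume-balanced partition with vol(C_B) = vol(C̄_B) = vol(V)/2. If Cut(C_B, C̄_B) > 0 and the cut-ratio q = Cut(C*, C̄*)/Cut(C_B, C̄_B) satisfies q > 4y(1−y), then NCut(C_B, C̄_B) < NCut(C*, C̄*); that is, the Normalized Cut objective prefers the balanced cut over the unbalanced cut. -/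
/-! Both objectives are the cut value times a factor that depends only on how the volume is
split: `2 + 2 = 4` for the balanced cut and `1/y + 1/(1-y) = 1/(y(1-y))` for a `y`-split. Hence
`NCut(C_B) < NCut(C*)` says exactly `4 Cut(C_B) < Cut(C*) / (y(1-y))`, i.e. `q > 4y(1-y)`. -/

open Finset

/-- Cut value between two vertex sets. -/
noncomputable def cutVal {V : Type*} [Fintype V] (w : V → V → ℝ) (C D : Finset V) : ℝ :=
  ∑ u ∈ C, ∑ v ∈ D, w u v

/-- Volume of a vertex set: total weight of edges incident to it. -/
noncomputable def volVal {V : Type*} [Fintype V] (w : V → V → ℝ) (C : Finset V) : ℝ :=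
  ∑ u ∈ C, ∑ v ∈ (Finset.univ : Finset V), w u v

/-- Normalized Cut objective of the partition `(C, Cᶜ)`. -/
noncomputable def ncutVal {V : Type*} [Fintype V] [DecidableEq V] (w : V → V → ℝ)
    (C : Finset V) : ℝ :=
  cutVal w C Cᶜ *
    (volVal w (Finset.univ : Finset V) / volVal w C +
      volVal w (Finset.univ : Finset V) / volVal w Cᶜ)

theorem volVal_add_volVal_compl {V : Type*} [Fintype V] [DecidableEq V] (w : V → V → ℝ)
    (C : Finset V) : volVal w C + volVal w Cᶜ = volVal w univ :=
  sum_add_sum_compl C _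

theorem ncutVal_eq_four_mul_cutVal {V : Type*} [Fintype V] [DecidableEq V] {w : V → V → ℝ}
    {C : Finset V} (hT : volVal w univ ≠ 0) (hC : volVal w C = volVal w univ / 2)
    (hCc : volVal w Cᶜ = volVal w univ / 2) : ncutVal w C = 4 * cutVal w C Cᶜ := by
  rw [ncutVal, hC, hCc]
  field_simp
  ring

theorem ncutVal_eq_div_of_min_volVal {V : Type*} [Fintype V] [DecidableEq V]
    {w : V → V → ℝ} {C : Finset V} {y : ℝ} (hT : volVal w univ ≠ 0) (hy₀ : y ≠ 0)
    (hy₁ : 1 - y ≠ 0) (hmin : min (volVal w C) (volVal w Cᶜ) = y * volVal w univ) :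
    ncutVal w C = cutVal w C Cᶜ / (y * (1 - y)) := by
  have hsum := volVal_add_volVal_compl w C
  rw [ncutVal]
  rcases min_cases (volVal w C) (volVal w Cᶜ) with ⟨hC, -⟩ | ⟨hCc, -⟩
  · have hCc : volVal w Cᶜ = (1 - y) * volVal w univ := by linarith
    rw [hCc, ← hC, hmin]
    field_simp
    ring
  · have hC : volVal w C = (1 - y) * volVal w univ := by linarith
    rw [hC, ← hCc, hmin]
    field_simp
    ring

theorem ncut_prefers_balanced_cut_general
    {V : Type*} [Fintype V] [DecidableEq V]
    (w : V → V → ℝ)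
    (hvol_pos : 0 < volVal w (Finset.univ : Finset V))
    (Cstar CB : Finset V) (y : ℝ)
    (hy_pos : 0 < y) (hy_lt : y < 1 / 2)
    (hy : min (volVal w Cstar) (volVal w Cstarᶜ) = y * volVal w (Finset.univ : Finset V))
    (hCB : volVal w CB = volVal w (Finset.univ : Finset V) / 2)
    (hCBc : volVal w CBᶜ = volVal w (Finset.univ : Finset V) / 2)
    (hcutB_pos : 0 < cutVal w CB CBᶜ)
    (hq : cutVal w Cstar Cstarᶜ / cutVal w CB CBᶜ > 4 * y * (1 - y)) :
    ncutVal w CB < ncutVal w Cstar := by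
  have hbalance : 0 < y * (1 - y) := mul_pos hy_pos (by linarith)
  rw [ncutVal_eq_four_mul_cutVal hvol_pos.ne' hCB hCBc,
    ncutVal_eq_div_of_min_volVal hvol_pos.ne' hy_pos.ne' (by linarith) hy,
    lt_div_iff₀ hbalance]
  have hcut : 4 * y * (1 - y) * cutVal w CB CBᶜ < cutVal w Cstar Cstarᶜ :=
    (lt_div_iff₀ hcutB_pos).mp hq
  linarith

/-- If the data is `y`-unbalanced in volume with `0 < y < 1/2` and the cut-ratio
`q = Cut(C*,C̄*)/Cut(C_B,C̄_B)` exceeds `4y(1-y)`, then Normalized Cut prefers the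
volume-balanced cut. -/
theorem ncut_prefers_balanced_cut
    {V : Type*} [Fintype V] [DecidableEq V]
    (w : V → V → ℝ)
    (hw_nonneg : ∀ u v, 0 ≤ w u v)
    (hw_symm : ∀ u v, w u v = w v u)
    (hvol_pos : 0 < volVal w (Finset.univ : Finset V))
    (Cstar CB : Finset V) (y : ℝ)
    (hstar_ne : Cstar.Nonempty) (hstar_c_ne : Cstarᶜ.Nonempty)
    (hvolstar_pos : 0 < volVal w Cstar) (hvolstar_c_pos : 0 < volVal w Cstarᶜ)
    (hy_pos : 0 < y) (hy_lt : y < 1 / 2)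
    (hy : min (volVal w Cstar) (volVal w Cstarᶜ) = y * volVal w (Finset.univ : Finset V))
    (hCB : volVal w CB = volVal w (Finset.univ : Finset V) / 2)
    (hCBc : volVal w CBᶜ = volVal w (Finset.univ : Finset V) / 2)
    (hcutB_pos : 0 < cutVal w CB CBᶜ)
    (hq : cutVal w Cstar Cstarᶜ / cutVal w CB CBᶜ > 4 * y * (1 - y)) :
    ncutVal w CB < ncutVal w Cstar :=
  ncut_prefers_balanced_cut_general w hvol_pos Cstar CB y hy_pos hy_lt hy hCB hCBc hcutB_pos hq
end

section
/- (Bounded differences of the windowed order-statistic average.) Let C > 0, let l and m be positive integers with 2l ≤ m, and let a = (a₁, …, a_m) and a' = (a'₁, …, a'_m) be two tuples of real numbers in [0, C] that differ in exactly one coordinate. Denote by a_{(1)} ≤ a_{(2)} ≤ … ≤ a_{(m)} the order statistics of a, and similarly for a'. Then | (1/l) Σ_{i=l+1}^{2l} a_{(i)} − (1/l) Σ_{i=l+1}^{2l} a'_{(i)} | ≤ 2C/l. In particular, the statistic G(x; D) = (1/l) Σ_{i=l+1}^{2l} D_{(i)}(x), the average of the (l+1)-th through 2l-th smallest distances from x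 to the points of D (all distances lying in [0, C]), changes by at most 2C/l when a single point of D is replaced. -/
/-- The `i`-th (0-indexed) order statistic of a tuple: its `i`-th smallest entry. -/
noncomputable def orderStat {m : ℕ} (a : Fin m → ℝ) (i : Fin m) : ℝ :=
  (a ∘ Tuple.sort a) i

open Finset


lemma L1 {m : ℕ} (a : Fin m → ℝ) (i : Fin m) :
    m - (i : ℕ) ≤ (univ.filter (fun j => orderStat a i ≤ a j)).card := by
  classical
  have hsub : (Finset.Ici i).image (Tuple.sort a) ⊆ univ.filter (fun j => orderStat a i ≤ a j) := by
    intro j hj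
    simp only [mem_image, mem_Ici] at hj
    obtain ⟨k, hk, rfl⟩ := hj
    simp only [mem_filter, mem_univ, true_and]
    exact Tuple.monotone_sort a hk
  have hc : ((Finset.Ici i).image (Tuple.sort a)).card = m - (i : ℕ) := by
    rw [Finset.card_image_of_injective _ (Tuple.sort a).injective, Fin.card_Ici]
  exact hc ▸ Finset.card_le_card hsub

lemma L2 {m : ℕ} (a : Fin m → ℝ) (i : Fin m) :
    (univ.filter (fun j => orderStat a i < a j)).card ≤ m - 1 - (i : ℕ) := by
  classical
  have hsub : univ.filter (fun j => orderStat a i < a j) ⊆ (Finset.Ioi i).image (Tuple.sort a) := by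
    intro j hj
    simp only [mem_filter, mem_univ, true_and] at hj
    refine mem_image.2 ⟨(Tuple.sort a).symm j, ?_, by simp⟩
    rw [mem_Ioi]
    by_contra hle
    have : a j ≤ orderStat a i := by
      have := Tuple.monotone_sort a (le_of_not_gt hle)
      simpa [orderStat] using this
    linarith
  calc (univ.filter (fun j => orderStat a i < a j)).card
      ≤ ((Finset.Ioi i).image (Tuple.sort a)).card := Finset.card_le_card hsub
    _ = m - 1 - (i : ℕ) := by
        rw [Finset.card_image_of_injective _ (Tuple.sort a).injective, Fin.card_Ioi]

lemma L3 {m : ℕ} (a a' : Fin m → ℝ)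
    (hdiff : ∃ j, ∀ i, i ≠ j → a i = a' i)
    (i i' : Fin m) (hii' : (i' : ℕ) = (i : ℕ) + 1) :
    orderStat a i ≤ orderStat a' i' := by
  classical
  obtain ⟨j0, hj0⟩ := hdiff
  by_contra hlt
  push_neg at hlt
  have hA := L1 a i
  have hB := L2 a' i'
  have hsub : (univ.filter (fun j => orderStat a i ≤ a j)).erase j0 ⊆
      univ.filter (fun j => orderStat a' i' < a' j) := by
    intro j hj
    rw [Finset.mem_erase] at hj
    obtain ⟨hne, hj⟩ := hj
    simp only [mem_filter, mem_univ, true_and] at hj ⊢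
    rw [← hj0 j hne]
    linarith
  have hcard : (univ.filter (fun j => orderStat a i ≤ a j)).card - 1 ≤
      (univ.filter (fun j => orderStat a' i' < a' j)).card := by
    calc _ ≤ ((univ.filter (fun j => orderStat a i ≤ a j)).erase j0).card :=
            Finset.pred_card_le_card_erase
      _ ≤ _ := Finset.card_le_card hsub
  have him : (i : ℕ) + 1 < m := hii' ▸ i'.isLt
  omega

noncomputable def gOS {m : ℕ} (a : Fin m → ℝ) (n : ℕ) : ℝ :=
  if h : n < m then orderStat a ⟨n, h⟩ else 0

lemma sum_le {m : ℕ} (C : ℝ) (hC : 0 < C) (l : ℕ) (hl : 0 < l) (h2l : 2 * l ≤ m)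
    (a a' : Fin m → ℝ)
    (ha : ∀ i, a i ∈ Set.Icc (0 : ℝ) C) (ha' : ∀ i, a' i ∈ Set.Icc (0 : ℝ) C)
    (hdiff : ∃ j, ∀ i, i ≠ j → a i = a' i) :
    ∑ n ∈ Finset.Ico l (2 * l), gOS a n ≤ C + ∑ n ∈ Finset.Ico l (2 * l), gOS a' n := by
  have hbound : ∀ (b : Fin m → ℝ), (∀ i, b i ∈ Set.Icc (0 : ℝ) C) →
      ∀ n, 0 ≤ gOS b n ∧ gOS b n ≤ C := by
    intro b hb n
    unfold gOS
    split
    · exact ⟨(hb _).1, (hb _).2⟩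
    · exact ⟨le_refl 0, le_of_lt hC⟩
  have h1 : ∑ n ∈ Finset.Ico l (2 * l), gOS a n
      = (∑ n ∈ Finset.Ico l (2 * l - 1), gOS a n) + gOS a (2 * l - 1) := by
    conv_lhs => rw [show 2 * l = (2 * l - 1) + 1 from by omega]
    rw [Finset.sum_Ico_succ_top (by omega)]
  have h2 : ∑ n ∈ Finset.Ico l (2 * l - 1), gOS a n
      ≤ ∑ n ∈ Finset.Ico l (2 * l - 1), gOS a' (n + 1) := by
    apply Finset.sum_le_sum
    intro n hn
    rw [Finset.mem_Ico] at hn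
    have h1 : n < m := by omega
    have h2 : n + 1 < m := by omega
    unfold gOS
    rw [dif_pos h1, dif_pos h2]
    exact L3 a a' hdiff ⟨n, h1⟩ ⟨n + 1, h2⟩ rfl
  have h3 : ∑ n ∈ Finset.Ico l (2 * l - 1), gOS a' (n + 1)
      = ∑ n ∈ Finset.Ico (l + 1) (2 * l), gOS a' n := by
    rw [Finset.sum_Ico_eq_sum_range, Finset.sum_Ico_eq_sum_range]
    have : 2 * l - 1 - l = 2 * l - (l + 1) := by omega
    rw [this]
    exact Finset.sum_congr rfl fun i _ => by ring_nf
  have h4 : ∑ n ∈ Finset.Ico (l + 1) (2 * l), gOS a' n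
      ≤ ∑ n ∈ Finset.Ico l (2 * l), gOS a' n := by
    rw [Finset.sum_eq_sum_Ico_succ_bot (by omega : l < 2 * l)]
    have := (hbound a' ha' l).1
    linarith
  have h5 : gOS a (2 * l - 1) ≤ C := (hbound a ha _).2
  linarith

/-- Bounded differences of the windowed order-statistic average:
if two tuples of reals in `[0, C]` differ in exactly one coordinate, then the averages of their
`(l+1)`-th through `2l`-th order statistics differ by at most `2C/l`. -/
theorem orderStat_window_bounded_difference
    {m : ℕ} (C : ℝ) (hC : 0 < C) (l : ℕ) (hl : 0 < l) (h2l : 2 * l ≤ m)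
    (a a' : Fin m → ℝ)
    (ha : ∀ i, a i ∈ Set.Icc (0 : ℝ) C) (ha' : ∀ i, a' i ∈ Set.Icc (0 : ℝ) C)
    (hdiff : ∃ j, a j ≠ a' j ∧ ∀ i, i ≠ j → a i = a' i) :
    |(1 / (l : ℝ)) * ∑ i : Fin l, orderStat a ⟨l + (i : ℕ), by omega⟩ -
      (1 / (l : ℝ)) * ∑ i : Fin l, orderStat a' ⟨l + (i : ℕ), by omega⟩| ≤ 2 * C / l := by
  obtain ⟨j0, _, hj0⟩ := hdiff
  have hconv : ∀ (b : Fin m → ℝ),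
      ∑ i : Fin l, orderStat b ⟨l + (i : ℕ), by omega⟩
        = ∑ n ∈ Finset.Ico l (2 * l), gOS b n := by
    intro b
    have step1 : ∑ i : Fin l, orderStat b ⟨l + (i : ℕ), by omega⟩
        = ∑ i : Fin l, gOS b (l + (i : ℕ)) := by
      refine Finset.sum_congr rfl fun i _ => ?_
      have hi : (i : ℕ) < l := i.isLt
      unfold gOS
      rw [dif_pos (by omega)]
    rw [step1, Fin.sum_univ_eq_sum_range (fun i => gOS b (l + i)),
      Finset.sum_Ico_eq_sum_range, show 2 * l - l = l from by omega]
  rw [hconv a, hconv a']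
  have hle1 := sum_le C hC l hl h2l a a' ha ha' ⟨j0, hj0⟩
  have hle2 := sum_le C hC l hl h2l a' a ha' ha ⟨j0, fun i hi => (hj0 i hi).symm⟩
  have hlp : (0:ℝ) < l := by exact_mod_cast hl
  rw [← mul_sub, abs_mul, abs_of_nonneg (by positivity : (0:ℝ) ≤ 1 / (l:ℝ))]
  have habs : |∑ n ∈ Finset.Ico l (2 * l), gOS a n - ∑ n ∈ Finset.Ico l (2 * l), gOS a' n| ≤ C :=
    abs_sub_le_iff.2 ⟨by linarith, by linarith⟩
  calc 1 / (l:ℝ) * |_| ≤ 1 / (l:ℝ) * C := by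
        apply mul_le_mul_of_nonneg_left habs (by positivity)
    _ ≤ 2 * C / l := by
        rw [div_mul_eq_mul_div, one_mul]
        gcongr
        linarith
end

section
/- (Integral of spherical-cap volumes.) Let d ≥ 1, r > 0, and let e be a unit vector in ℝ^d. For t ≥ 0, let Cap(t) = { x ∈ ℝ^d : ‖x‖ ≤ r and ⟨x, e⟩ ≥ t } be the spherical cap of the ball B(0, r) at distance t from the center. Then ∫_0^r vol_d(Cap(t)) dt = η_{d−1} · r^{d+1} / (d+1), where vol_d denotes d-dimensional Lebesgue measure. -/
/-!
By the layer-cake formula, `∫₀ʳ vol(Cap(t)) dt` is the integral of `⟪x, e⟫⁺` over the ball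
`B(0, r)`. A linear isometry carries `e` to the first basis vector of `ℝ × ℝ^(d-1)` (with the `L²`
norm), where Cavalieri's principle slices the ball into `(d-1)`-balls of radius `√(r² - s²)`: the
integral becomes `η_{d-1} ∫₀ʳ s (r² - s²)^((d-1)/2) ds = η_{d-1} r^(d+1) / (d+1)`.
-/

open MeasureTheory
open scoped RealInnerProductSpace

/-- `unitBallVol d` is `η_d`, the Lebesgue volume of the unit ball in `ℝ^d`
(with the convention `η₀ = 1`). -/
noncomputable def unitBallVol (d : ℕ) : ℝ :=
  (volume (Metric.closedBall (0 : EuclideanSpace ℝ (Fin d)) 1)).toReal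

open Metric Set
open scoped ENNReal

section Cap

variable {E : Type*} [NormedAddCommGroup E] [InnerProductSpace ℝ E]

def sphericalCap (r : ℝ) (e : E) (t : ℝ) : Set E :=
  {x | ‖x‖ ≤ r ∧ t ≤ ⟪x, e⟫}

theorem sphericalCap_subset_closedBall (r : ℝ) (e : E) (t : ℝ) :
    sphericalCap r e t ⊆ closedBall 0 r :=
  fun _ hx => mem_closedBall_zero_iff.2 hx.1

theorem measure_sphericalCap_antitone [MeasurableSpace E] (μ : Measure E) (r : ℝ) (e : E) :
    Antitone fun t => μ (sphericalCap r e t) :=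
  fun _ _ h => measure_mono fun _ hx => ⟨hx.1, h.trans hx.2⟩

theorem sphericalCap_eq_empty {r t : ℝ} (hrt : r < t) {e : E} (he : ‖e‖ ≤ 1) :
    sphericalCap r e t = ∅ := by
  refine eq_empty_of_forall_notMem fun x ⟨hx, htx⟩ => ?_
  have := (real_inner_le_norm x e).trans (mul_le_of_le_one_right (norm_nonneg x) he)
  linarith

theorem lintegral_measure_sphericalCap [MeasurableSpace E] [OpensMeasurableSpace E]
    (μ : Measure E) {r : ℝ} (hr : 0 ≤ r) {e : E} (he : ‖e‖ ≤ 1) :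
    ∫⁻ t in Ioc 0 r, μ (sphericalCap r e t) =
      ∫⁻ x in closedBall 0 r, ENNReal.ofReal ⟪x, e⟫ ∂μ := by
  have hlayer := lintegral_eq_lintegral_meas_le (μ.restrict (closedBall 0 r))
    (f := fun x => max ⟪x, e⟫ 0) (ae_of_all _ fun _ => le_max_right _ _) (by fun_prop)
  simp only [ENNReal.ofReal_max, ENNReal.ofReal_zero, max_eq_left (zero_le (α := ℝ≥0∞))]
    at hlayer
  calc ∫⁻ t in Ioc 0 r, μ (sphericalCap r e t)
      = ∫⁻ t in Ioi 0, μ (sphericalCap r e t) := by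
        rw [← Ioc_union_Ioi_eq_Ioi hr, lintegral_union measurableSet_Ioi Ioc_disjoint_Ioi_same,
          setLIntegral_congr_fun measurableSet_Ioi fun t ht => by
            rw [sphericalCap_eq_empty ht he, measure_empty],
          lintegral_zero, add_zero]
    _ = ∫⁻ t in Ioi 0, μ.restrict (closedBall 0 r) {x | t ≤ max ⟪x, e⟫ 0} := by
        refine setLIntegral_congr_fun measurableSet_Ioi fun t (ht : 0 < t) => ?_
        rw [Measure.restrict_apply' measurableSet_closedBall]
        congr 1
        ext x
        simp [sphericalCap, not_le.2 ht, and_comm]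
    _ = _ := hlayer.symm

end Cap

section Isometry

variable {E F : Type*} [NormedAddCommGroup E] [InnerProductSpace ℝ E]
  [NormedAddCommGroup F] [InnerProductSpace ℝ F]
  [FiniteDimensional ℝ E] [FiniteDimensional ℝ F]

theorem exists_linearIsometryEquiv_apply_eq (h : Module.finrank ℝ E = Module.finrank ℝ F)
    {v : E} {w : F} (hvw : ‖v‖ = ‖w‖) : ∃ f : E ≃ₗᵢ[ℝ] F, f v = w := by
  let φ := (stdOrthonormalBasis ℝ E).equiv (stdOrthonormalBasis ℝ F) (finCongr h)
  exact ⟨φ.trans (ℝ ∙ (φ v - w))ᗮ.reflection,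
    Submodule.reflection_sub (by rw [φ.norm_map, hvw])⟩

theorem setLIntegral_closedBall_inner_comp_linearIsometryEquiv
    [MeasurableSpace E] [BorelSpace E] [MeasurableSpace F] [BorelSpace F]
    (f : E ≃ₗᵢ[ℝ] F) (g : ℝ → ℝ≥0∞) (r : ℝ) (e : E) :
    ∫⁻ x in closedBall 0 r, g ⟪x, e⟫ = ∫⁻ y in closedBall 0 r, g ⟪y, f e⟫ := by
  rw [← f.measurePreserving.setLIntegral_comp_preimage_emb f.toHomeomorph.measurableEmbedding,
    f.preimage_closedBall, map_zero]
  simp_rw [f.inner_map_map]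

end Isometry

theorem WithLp.finrank_prod (p : ℝ≥0∞) (K U V : Type*) [Field K] [AddCommGroup U] [Module K U]
    [AddCommGroup V] [Module K V] [FiniteDimensional K U] [FiniteDimensional K V] :
    Module.finrank K (WithLp p (U × V)) = Module.finrank K U + Module.finrank K V := by
  rw [(WithLp.linearEquiv p K (U × V)).finrank_eq, Module.finrank_prod]

theorem integral_mul_sqrt_sq_sub_sq_pow (n : ℕ) {r : ℝ} (hr : 0 ≤ r) :
    ∫ s in (0 : ℝ)..r, s * √(r ^ 2 - s ^ 2) ^ n = r ^ (n + 2) / (n + 2) := by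
  have hderiv : ∀ s ∈ Ioo 0 r, HasDerivAt (fun s => -(√(r ^ 2 - s ^ 2) ^ (n + 2) / (n + 2)))
      (s * √(r ^ 2 - s ^ 2) ^ n) s := by
    rintro s ⟨hs0, hsr⟩
    have hpos : 0 < r ^ 2 - s ^ 2 := by nlinarith
    have hsqrt : √(r ^ 2 - s ^ 2) ≠ 0 := (Real.sqrt_pos.2 hpos).ne'
    refine ((((hasDerivAt_pow 2 s).const_sub (r ^ 2)).sqrt hpos.ne').fun_pow (n + 2)).div_const
      ((n : ℝ) + 2) |>.fun_neg |>.congr_deriv ?_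
    rw [show n + 2 - 1 = n + 1 by omega, pow_succ]
    field_simp
    push_cast
    ring
  rw [intervalIntegral.integral_eq_sub_of_hasDerivAt_of_le hr (by fun_prop) hderiv
    (by apply Continuous.intervalIntegrable; fun_prop)]
  simp [Real.sqrt_sq hr]

section Cavalieri

variable {V : Type*} [NormedAddCommGroup V] [InnerProductSpace ℝ V] [FiniteDimensional ℝ V]
  [MeasurableSpace V] [BorelSpace V]

theorem volume_setOf_norm_sq_le {c : ℝ} (hc : 0 ≤ c) :
    volume {z : V | ‖z‖ ^ 2 ≤ c} =
      ENNReal.ofReal (√c ^ Module.finrank ℝ V) * volume (closedBall (0 : V) 1) := by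
  have : {z : V | ‖z‖ ^ 2 ≤ c} = closedBall 0 √c := by
    ext z
    simp [Real.le_sqrt (norm_nonneg z) hc]
  rw [this, Measure.addHaar_closedBall' _ _ (Real.sqrt_nonneg c)]

theorem setLIntegral_closedBall_withLp_prod {g : ℝ → ℝ≥0∞} (hg : Measurable g) {r : ℝ}
    (hr : 0 ≤ r) :
    ∫⁻ y in closedBall (0 : WithLp 2 (ℝ × V)) r, g y.fst =
      ∫⁻ s, g s * volume {z : V | s ^ 2 + ‖z‖ ^ 2 ≤ r ^ 2} := by
  set D := {p : ℝ × V | p.1 ^ 2 + ‖p.2‖ ^ 2 ≤ r ^ 2}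
  have hD : MeasurableSet D := (isClosed_le (by fun_prop) continuous_const).measurableSet
  have hpre : WithLp.toLp 2 ⁻¹' closedBall (0 : WithLp 2 (ℝ × V)) r = D := by
    ext p
    simp [D, ← sq_le_sq₀ (norm_nonneg _) hr, WithLp.prod_norm_sq_eq_of_L2]
  rw [← (WithLp.volume_preserving_toLp ℝ V).setLIntegral_comp_preimage_emb
    (MeasurableEquiv.toLp 2 (ℝ × V)).measurableEmbedding, hpre, Measure.volume_eq_prod]
  simp only [WithLp.toLp_fst]
  have hmeas : Measurable (D.indicator fun p : ℝ × V => g p.1) :=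
    (hg.comp measurable_fst).indicator hD
  rw [← lintegral_indicator hD, lintegral_prod _ hmeas.aemeasurable]
  refine lintegral_congr fun s => ?_
  rw [← lintegral_indicator_const ((isClosed_le (by fun_prop) continuous_const).measurableSet)]
  rfl

theorem setLIntegral_closedBall_withLp_prod_ofReal_fst {r : ℝ} (hr : 0 ≤ r) :
    ∫⁻ y in closedBall (0 : WithLp 2 (ℝ × V)) r, ENNReal.ofReal y.fst =
      ENNReal.ofReal (r ^ (Module.finrank ℝ V + 2) / (Module.finrank ℝ V + 2)) *
        volume (closedBall (0 : V) 1) := by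
  set n := Module.finrank ℝ V
  set B := volume (closedBall (0 : V) 1)
  have hslice : ∀ s, ENNReal.ofReal s * volume {z : V | s ^ 2 + ‖z‖ ^ 2 ≤ r ^ 2} =
      (Ioc 0 r).indicator (fun s => ENNReal.ofReal (s * √(r ^ 2 - s ^ 2) ^ n) * B) s := by
    intro s
    by_cases hs : s ∈ Ioc 0 r
    · have : {z : V | s ^ 2 + ‖z‖ ^ 2 ≤ r ^ 2} = {z : V | ‖z‖ ^ 2 ≤ r ^ 2 - s ^ 2} := by
        simp only [le_sub_iff_add_le']
      rw [indicator_of_mem hs, this, volume_setOf_norm_sq_le (by nlinarith [hs.1, hs.2]),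
        ENNReal.ofReal_mul hs.1.le, mul_assoc]
    · rw [indicator_of_notMem hs]
      rcases not_and_or.1 hs with hs | hs
      · rw [ENNReal.ofReal_of_nonpos (not_lt.1 hs), zero_mul]
      · have : {z : V | s ^ 2 + ‖z‖ ^ 2 ≤ r ^ 2} = ∅ :=
          eq_empty_of_forall_notMem fun z (hz : s ^ 2 + ‖z‖ ^ 2 ≤ r ^ 2) => by
            nlinarith [not_le.1 hs, sq_nonneg ‖z‖]
        rw [this, measure_empty, mul_zero]
  have hint : IntegrableOn (fun s => s * √(r ^ 2 - s ^ 2) ^ n) (Ioc 0 r) :=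
    Continuous.integrableOn_Ioc (by fun_prop)
  have hnn : 0 ≤ᵐ[volume.restrict (Ioc 0 r)] fun s => s * √(r ^ 2 - s ^ 2) ^ n :=
    (ae_restrict_iff' measurableSet_Ioc).2 (ae_of_all _ fun s hs => by have := hs.1; positivity)
  rw [setLIntegral_closedBall_withLp_prod ENNReal.measurable_ofReal hr, lintegral_congr hslice,
    lintegral_indicator measurableSet_Ioc, lintegral_mul_const' _ _ measure_closedBall_lt_top.ne,
    ← ofReal_integral_eq_lintegral_ofReal hint hnn, ← intervalIntegral.integral_of_le hr,
    integral_mul_sqrt_sq_sub_sq_pow n hr]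

end Cavalieri

/-- Integral of spherical-cap volumes:
`∫_0^r vol_d(Cap(t)) dt = η_{d−1} · r^{d+1} / (d+1)`. -/
theorem integral_sphericalCap_volume
    (d : ℕ) (hd : 1 ≤ d) (r : ℝ) (hr : 0 < r)
    (e : EuclideanSpace ℝ (Fin d)) (he : ‖e‖ = 1) :
    ∫ t in (0 : ℝ)..r,
        (volume {x : EuclideanSpace ℝ (Fin d) | ‖x‖ ≤ r ∧ t ≤ ⟪x, e⟫}).toReal =
      unitBallVol (d - 1) * r ^ (d + 1) / (d + 1) := by
  obtain ⟨n, rfl⟩ : ∃ n, d = n + 1 := ⟨d - 1, by omega⟩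
  change ∫ t in (0 : ℝ)..r, (volume (sphericalCap r e t)).toReal = _
  obtain ⟨f, hf⟩ := exists_linearIsometryEquiv_apply_eq
    (F := WithLp 2 (ℝ × EuclideanSpace ℝ (Fin n))) (v := e) (w := WithLp.toLp 2 (1, 0))
    (by simp [WithLp.finrank_prod, add_comm]) (by simp [he])
  have hcap : ∫⁻ t in Ioc 0 r, volume (sphericalCap r e t) =
      ENNReal.ofReal (r ^ (n + 2) / (n + 2)) *
        volume (closedBall (0 : EuclideanSpace ℝ (Fin n)) 1) := by
    rw [lintegral_measure_sphericalCap volume hr.le he.le,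
      setLIntegral_closedBall_inner_comp_linearIsometryEquiv f, hf]
    simpa [WithLp.prod_inner_apply] using
      setLIntegral_closedBall_withLp_prod_ofReal_fst (V := EuclideanSpace ℝ (Fin n)) hr.le
  have hfin : ∀ t, volume (sphericalCap r e t) < ∞ := fun t =>
    (measure_mono (sphericalCap_subset_closedBall r e t)).trans_lt measure_closedBall_lt_top
  rw [intervalIntegral.integral_of_le hr.le,
    integral_toReal (measure_sphericalCap_antitone volume r e).measurable.aemeasurable
      (ae_of_all _ hfin), hcap, ENNReal.toReal_mul, ENNReal.toReal_ofReal (by positivity),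
    unitBallVol]
  push_cast
  ring
end
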